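/- arXiv:1605.06267 — 2 statements merged into one kernel-verified Lean document; each statement's English description precedes it below -/
import Mathlib

section
/- Let F be a finite field with q = 2^n elements. Let ⋆ : F × F → F be additive in each argument, commutative (a⋆a' = a'⋆a for all a, a'), and such that for every nonzero c ∈ F the map x ↦ x⋆c is a bijection of F. Let f : F → F be an additive bijection such that for every nonzero c ∈ F the set {x ∈ F : f(x) + x⋆c = 0} has exactly 2 elements. Let G be the abelian group with underlying set F × F and operation (a, b)·(a', b') := (a + a', b + b' + a⋆a'), whose identity is (0,0) and in which (a,b)⁻¹ = (a, b + a⋆a). Define D := {(a, b) ∈ F × F : there exists x ∈ F with f(x) + x⋆a + a⋆a = b}. Then D is a (q², q²/2 + q/2, q²/4 + q/2)-difference set in G; that is, D has exactly q²/2 + q/2 elements, and for every g ∈ G with g ≠ (0,0), the number of ordered pairs (d₁, d₂) ∈ D × D with d₁·d₂⁻¹ = g equals q²/4 + q/2. -/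
open Finset
open scoped Classical

set_option linter.unusedSectionVars false
set_option maxHeartbeats 1000000

/-- The group operation of `G₂ ≅ C₄ⁿ` on `F × F`: `(a,b)·(a',b') = (a+a', b+b'+a⋆a')`. -/
def gMul {F : Type*} [Field F] (star : F → F → F) (p p' : F × F) : F × F :=
  (p.1 + p'.1, p.2 + p'.2 + star p.1 p'.1)

/-- Inversion in the group `G₂`: `(a,b)⁻¹ = (a, b + a⋆a)`. -/
def gInv {F : Type*} [Field F] (star : F → F → F) (p : F × F) : F × F :=
  (p.1, p.2 + star p.1 p.1)

namespace HypAux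

private lemma card_filter_iff {α : Type*} [Fintype α] {P Q : α → Prop}
    {i1 : DecidablePred P} {i2 : DecidablePred Q} (h : ∀ b, P b ↔ Q b) :
    (@filter α P i1 univ).card = (@filter α Q i2 univ).card :=
  congrArg Finset.card (Finset.ext fun b => by
    simp only [Finset.mem_filter, Finset.mem_univ, true_and]
    exact h b)

end HypAux
open Finset
open scoped Classical

namespace HypAux

variable {F : Type*} [Field F] [Fintype F]

/-- fibers of an additive map translate -/
lemma fiber_translate (h2 : ∀ x : F, x + x = 0) (ψ : F → F)
    (hadd : ∀ x y, ψ (x + y) = ψ x + ψ y) (x₀ b : F) :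
    (univ.filter fun x : F => ψ x = b + ψ x₀).card
      = (univ.filter fun x : F => ψ x = b).card := by
  apply Finset.card_bij' (fun x _ => x + x₀) (fun x _ => x + x₀)
  · intro a ha
    simp only [mem_filter, mem_univ, true_and] at ha ⊢
    rw [hadd, ha, add_assoc, h2, add_zero]
  · intro a ha
    simp only [mem_filter, mem_univ, true_and] at ha ⊢
    rw [hadd, ha]
  · intro a _
    rw [add_assoc, h2, add_zero]
  · intro a _
    rw [add_assoc, h2, add_zero]

lemma fiber_card (h2 : ∀ x : F, x + x = 0) (ψ : F → F)
    (hadd : ∀ x y, ψ (x + y) = ψ x + ψ y) (b : F) :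
    (univ.filter fun x : F => ψ x = b).card
      = if ∃ x, ψ x = b then (univ.filter fun x : F => ψ x = 0).card else 0 := by
  split_ifs with h
  · obtain ⟨x₀, hx₀⟩ := h
    have := fiber_translate h2 ψ hadd x₀ 0
    rw [zero_add, hx₀] at this
    exact this
  · rw [Finset.card_eq_zero, Finset.filter_eq_empty_iff]
    intro x _
    exact fun hx => h ⟨x, hx⟩

lemma image_mul (h2 : ∀ x : F, x + x = 0) (ψ : F → F)
    (hadd : ∀ x y, ψ (x + y) = ψ x + ψ y) :
    (univ.filter fun x : F => ψ x = 0).card * (univ.image ψ).card = Fintype.card F := by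
  have h := Finset.card_eq_sum_card_image ψ (univ : Finset F)
  rw [Finset.card_univ] at h
  rw [h, Finset.sum_congr rfl (fun b hb => ?_), Finset.sum_const, smul_eq_mul, mul_comm]
  obtain ⟨x, _, hx⟩ := Finset.mem_image.mp hb
  rw [fiber_card h2 ψ hadd b, if_pos ⟨x, hx⟩]

/-- fiberwise card over the first coordinate -/
lemma card_prod (P : F → F → Prop) :
    (univ.filter fun p : F × F => P p.1 p.2).card
      = ∑ a : F, (univ.filter fun b : F => P a b).card := by
  rw [Finset.card_eq_sum_card_fiberwise
      (f := fun p : F × F => p.1) (t := univ) (fun x _ => mem_univ _)]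
  refine Finset.sum_congr rfl fun a _ => ?_
  refine Finset.card_bij' (fun p _ => p.2) (fun b _ => (a, b)) ?_ ?_ ?_ ?_
  case refine_1 =>
    intro p hp
    simp only [mem_filter, mem_univ, true_and] at hp ⊢
    rw [← hp.2]; exact hp.1
  case refine_2 =>
    intro b hb
    simp only [mem_filter, mem_univ, true_and] at hb ⊢
    exact ⟨hb, trivial⟩
  case refine_3 =>
    intro p hp
    simp only [mem_filter, mem_univ, true_and] at hp
    exact Prod.ext hp.2.symm rfl
  case refine_4 =>
    intro b _
    rfl

end HypAux

namespace HypAux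

set_option linter.unusedSectionVars false

variable {F : Type*} [Field F] [Fintype F]

/-- the workhorse: pair count = Kψ * Kχ * (intersection-of-images count) -/
lemma W (h2 : ∀ x : F, x + x = 0) (ψ χ : F → F)
    (hψ : ∀ x y, ψ (x + y) = ψ x + ψ y) (hχ : ∀ x y, χ (x + y) = χ x + χ y) (t : F) :
    (univ.filter fun p : F × F => χ p.2 = ψ p.1 + t).card
      = (univ.filter fun x : F => ψ x = 0).card
        * (univ.filter fun x : F => χ x = 0).card
        * (univ.filter fun b : F => (∃ y, ψ y = b) ∧ ∃ x, χ x = b + t).card := by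
  set Kψ := (univ.filter fun x : F => ψ x = 0).card with hKψ
  set Kχ := (univ.filter fun x : F => χ x = 0).card with hKχ
  rw [card_prod (fun y x => χ x = ψ y + t)]
  have step1 : ∀ y : F, (univ.filter fun x : F => χ x = ψ y + t).card
      = if (∃ x, χ x = ψ y + t) then Kχ else 0 := fun y => fiber_card h2 χ hχ _
  rw [Finset.sum_congr rfl (fun y _ => step1 y), Finset.sum_ite, Finset.sum_const,
    Finset.sum_const_zero, add_zero, smul_eq_mul]
  -- now: #(filter (fun y => ∃ x, χ x = ψ y + t) univ) * Kχ = Kψ * Kχ * #(...)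
  have key : (univ.filter fun y : F => ∃ x, χ x = ψ y + t).card
      = Kψ * (univ.filter fun b : F => (∃ y, ψ y = b) ∧ ∃ x, χ x = b + t).card := by
    rw [Finset.card_eq_sum_card_fiberwise (f := ψ) (t := univ.image ψ)
      (fun x _ => Finset.mem_image_of_mem ψ (mem_univ x))]
    have inner : ∀ b ∈ univ.image ψ,
        ((univ.filter fun y : F => ∃ x, χ x = ψ y + t).filter fun y => ψ y = b).card
        = if (∃ x, χ x = b + t) then Kψ else 0 := by
      intro b hb
      rw [Finset.filter_filter]
      split_ifs with h
      · have : (univ.filter fun y : F => (∃ x, χ x = ψ y + t) ∧ ψ y = b)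
            = univ.filter fun y : F => ψ y = b := by
          apply Finset.filter_congr
          intro y _
          constructor
          · exact fun hy => hy.2
          · intro hy; exact ⟨by rw [hy]; exact h, hy⟩
        rw [this, fiber_card h2 ψ hψ b, if_pos]
        obtain ⟨x, _, hx⟩ := Finset.mem_image.mp hb
        exact ⟨x, hx⟩
      · rw [Finset.card_eq_zero, Finset.filter_eq_empty_iff]
        rintro y _ ⟨⟨x, hx⟩, hyb⟩
        exact h ⟨x, by rw [← hyb]; exact hx⟩
    rw [Finset.sum_congr rfl inner, Finset.sum_ite, Finset.sum_const,
      Finset.sum_const_zero, add_zero, smul_eq_mul]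
    rw [mul_comm]
    congr 1
    apply congrArg
    apply Finset.ext
    intro b
    simp only [Finset.mem_filter, Finset.mem_image, mem_univ, true_and]
  rw [key]; ring

end HypAux

namespace HypAux

set_option linter.unusedSectionVars false

variable {F : Type*} [Field F] [Fintype F]

lemma eq_iff_char2 (htwo : (2:F) = 0) {u v w z : F} (h : u + v = w + z) :
    u = v ↔ w = z := by
  constructor
  · intro hh
    linear_combination (-1 : F) * h + hh + (v - z) * htwo
  · intro hh
    linear_combination h + hh + (z - v) * htwo

/-- fiberwise card over the second coordinate -/
lemma card_prod' (P : F → F → Prop) :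
    (univ.filter fun p : F × F => P p.1 p.2).card
      = ∑ b : F, (univ.filter fun a : F => P a b).card := by
  rw [Finset.card_eq_sum_card_fiberwise
      (f := fun p : F × F => p.2) (t := univ) (fun x _ => mem_univ _)]
  refine Finset.sum_congr rfl fun b _ => ?_
  refine Finset.card_bij' (fun p _ => p.1) (fun a _ => (a, b)) ?_ ?_ ?_ ?_
  case refine_1 =>
    intro p hp
    simp only [mem_filter, mem_univ, true_and] at hp ⊢
    rw [← hp.2]; exact hp.1
  case refine_2 =>
    intro a ha
    simp only [mem_filter, mem_univ, true_and] at ha ⊢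
    exact ⟨ha, trivial⟩
  case refine_3 =>
    intro p hp
    simp only [mem_filter, mem_univ, true_and] at hp
    exact Prod.ext rfl hp.2.symm
  case refine_4 =>
    intro a _
    rfl

lemma shift_count (h2 : ∀ x : F, x + x = 0) (Q Q' : F → Prop) (d : F)
    (h : ∀ b, Q b ↔ Q' (b + d)) :
    (univ.filter fun b : F => Q b).card = (univ.filter fun b : F => Q' b).card := by
  refine Finset.card_bij' (fun b _ => b + d) (fun b _ => b + d) ?_ ?_ ?_ ?_
  case refine_1 =>
    intro b hb
    simp only [mem_filter, mem_univ, true_and] at hb ⊢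
    exact (h b).mp hb
  case refine_2 =>
    intro b hb
    simp only [mem_filter, mem_univ, true_and] at hb ⊢
    rw [h (b + d), add_assoc, h2, add_zero]
    exact hb
  case refine_3 =>
    intro b _
    show b + d + d = b
    rw [add_assoc, h2, add_zero]
  case refine_4 =>
    intro b _
    show b + d + d = b
    rw [add_assoc, h2, add_zero]

lemma image_count (h2 : ∀ x : F, x + x = 0) (ψ : F → F) (d : F) :
    (univ.filter fun b : F => ∃ x, ψ x = b + d).card = (univ.image ψ).card := by
  have h := shift_count h2 (fun b : F => ∃ x, ψ x = b + d)
    (fun b : F => ∃ x, ψ x = b) d (fun b => Iff.rfl)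
  beta_reduce at h
  calc (univ.filter fun b : F => ∃ x, ψ x = b + d).card
      = (univ.filter fun b : F => ∃ x, ψ x = b).card := by
        convert h using 2 <;> (apply Finset.ext; intro b; simp)
    _ = (univ.image ψ).card := by
        congr 1
        apply Finset.ext
        intro b
        simp [eq_comm, Finset.mem_image]

lemma P1 (h2 : ∀ x : F, x + x = 0) (s : F → F) (hb : Function.Bijective s) (R : F → F) :
    (univ.filter fun p : F × F => s p.2 = R (p.1 + p.2)).card = Fintype.card F := by
  set g := Equiv.ofBijective s hb with hg
  have hgs : ∀ x, g x = s x := fun x => rfl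
  have harr : ∀ x z : F, x + z + x = z := by
    intro x z
    rw [add_comm x z, add_assoc, h2, add_zero]
  rw [← Finset.card_univ (α := F)]
  refine Finset.card_bij' (fun p _ => p.1 + p.2) (fun z _ => (g.symm (R z) + z, g.symm (R z)))
    ?_ ?_ ?_ ?_
  case refine_1 =>
    intro p _
    exact mem_univ _
  case refine_2 =>
    intro z _
    simp only [mem_filter, mem_univ, true_and]
    rw [harr, ← hgs, g.apply_symm_apply]
  case refine_3 =>
    intro p hp
    simp only [mem_filter, mem_univ, true_and] at hp
    have h1 : g.symm (R (p.1 + p.2)) = p.2 := by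
      rw [Equiv.symm_apply_eq, hgs, hp]
    refine Prod.ext ?_ ?_
    · show g.symm (R (p.1 + p.2)) + (p.1 + p.2) = p.1
      rw [h1, add_comm p.1 p.2, ← add_assoc, h2, zero_add]
    · exact h1
  case refine_4 =>
    intro z _
    exact harr _ _

lemma P2 (h2 : ∀ x : F, x + x = 0) (ψ : F → F) (e : F) :
    (univ.filter fun p : F × F => ψ (p.1 + p.2) = e).card
      = Fintype.card F * (univ.filter fun z : F => ψ z = e).card := by
  rw [card_prod (fun x y => ψ (x + y) = e)]
  have inner : ∀ x : F, (univ.filter fun y : F => ψ (x + y) = e).card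
      = (univ.filter fun z : F => ψ z = e).card := by
    intro x
    refine Finset.card_bij' (fun y _ => x + y) (fun z _ => x + z) ?_ ?_ ?_ ?_
    case refine_1 =>
      intro y hy
      simp only [mem_filter, mem_univ, true_and] at hy ⊢
      exact hy
    case refine_2 =>
      intro z hz
      simp only [mem_filter, mem_univ, true_and] at hz ⊢
      rwa [← add_assoc, h2, zero_add]
    case refine_3 =>
      intro y _
      show x + (x + y) = y
      rw [← add_assoc, h2, zero_add]
    case refine_4 =>
      intro z _
      show x + (x + z) = z
      rw [← add_assoc, h2, zero_add]
  rw [Finset.sum_congr rfl fun x _ => inner x, Finset.sum_const, smul_eq_mul, Finset.card_univ]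

end HypAux

open HypAux in
/-- Theorem 5.3, difference set in `G₂ ≅ C₄ⁿ`: let `(F, +, ⋆)` be a commutative
presemifield of order `q = 2^n` and `f` an additive bijection such that for every
nonzero `c` the kernel `{x : f(x) + x⋆c = 0}` has exactly `2` elements (a translation
hyperoval of type (a)).  Let `G` be the abelian group on `F × F` with multiplication
`(a,b)·(a',b') = (a+a', b+b'+a⋆a')` and inverse `(a,b)⁻¹ = (a, b+a⋆a)`.  Then
`D = {(a,b) : ∃ x, f(x) + x⋆a + a⋆a = b}` is a `(q², q²/2 + q/2, q²/4 + q/2)`-difference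
set in `G`. -/
theorem hyperoval_difference_set_C4n
    {F : Type*} [Field F] [Fintype F]
    (n q : ℕ) (hq : q = 2 ^ n) (hF : Fintype.card F = q)
    (star : F → F → F)
    (hstar_left : ∀ a b c : F, star (a + b) c = star a c + star b c)
    (hstar_right : ∀ a b c : F, star a (b + c) = star a b + star a c)
    (hstar_comm : ∀ a b : F, star a b = star b a)
    (hstar_bij : ∀ c : F, c ≠ 0 → Function.Bijective (fun x : F => star x c))
    (f : F → F)
    (hf_add : ∀ x y : F, f (x + y) = f x + f y)
    (hf_bij : Function.Bijective f)
    (hker : ∀ c : F, c ≠ 0 → ({x : F | f x + star x c = 0}).ncard = 2) :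
    ({p : F × F | ∃ x : F, f x + star x p.1 + star p.1 p.1 = p.2}).ncard
        = q ^ 2 / 2 + q / 2 ∧
    ∀ g : F × F, g ≠ (0, 0) →
      ({dd : (F × F) × (F × F) |
          dd.1 ∈ {p : F × F | ∃ x : F, f x + star x p.1 + star p.1 p.1 = p.2} ∧
          dd.2 ∈ {p : F × F | ∃ x : F, f x + star x p.1 + star p.1 p.1 = p.2} ∧
          gMul star dd.1 (gInv star dd.2) = g}).ncard = q ^ 2 / 4 + q / 2 := by
  classical
  -- characteristic 2 facts
  have hcard2 : 1 < Fintype.card F := Fintype.one_lt_card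
  have hn : n ≠ 0 := by
    rintro rfl
    rw [hq] at hF
    simp at hF
    omega
  have htwo : (2 : F) = 0 := by
    have h := FiniteField.cast_card_eq_zero F
    rw [hF, hq] at h
    push_cast at h
    exact (pow_eq_zero_iff hn).mp h
  have h2 : ∀ x : F, x + x = 0 := fun x => by linear_combination x * htwo
  obtain ⟨k, hk⟩ : ∃ k, q = 2 * (k + 1) := by
    refine ⟨2 ^ (n - 1) - 1, ?_⟩
    have h1 : 1 ≤ 2 ^ (n - 1) := Nat.one_le_two_pow
    have h2' : q = 2 * 2 ^ (n - 1) := by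
      rw [hq]
      conv_lhs => rw [show n = (n - 1) + 1 by omega]
      rw [pow_succ']
    omega
  have hq2 : 2 ≤ q := by omega
  have hf0 : f 0 = 0 := by
    have h := hf_add 0 0
    rw [add_zero] at h
    linear_combination -h
  have hs0l : ∀ a : F, star 0 a = 0 := fun a => by
    have h := hstar_left 0 0 a
    rw [add_zero] at h
    linear_combination -h
  have hs0r : ∀ a : F, star a 0 = 0 := fun a => by
    have h := hstar_right a 0 0
    rw [add_zero] at h
    linear_combination -h
  -- additive maps L a = fun x => f x + star x a and their kernels
  have hLadd : ∀ a x y : F, f (x + y) + star (x + y) a = (f x + star x a) + (f y + star y a) := by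
    intro a x y
    rw [hf_add, hstar_left]
    ring
  have hKa : ∀ a : F, (univ.filter fun x : F => f x + star x a = 0).card
      = if a = 0 then 1 else 2 := by
    intro a
    split_ifs with ha
    · subst ha
      have hsingle : (univ.filter fun x : F => f x + star x 0 = 0) = {0} := by
        apply Finset.ext
        intro x
        simp only [mem_filter, mem_univ, true_and, Finset.mem_singleton]
        rw [hs0r, add_zero]
        constructor
        · intro hx
          apply hf_bij.injective
          rw [hf0, hx]
        · rintro rfl
          exact hf0
      rw [hsingle, Finset.card_singleton]
    · have h := hker a ha
      have hset : {x : F | f x + star x a = 0}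
          = ↑(univ.filter fun x : F => f x + star x a = 0) := by
        apply Set.ext
        intro x
        simp
      rw [hset, Set.ncard_coe_finset] at h
      exact h
  have himg : ∀ a : F, (univ.filter fun x : F => f x + star x a = 0).card
      * (univ.image (fun x : F => f x + star x a)).card = q := by
    intro a
    rw [← hF]
    exact image_mul h2 (fun x : F => f x + star x a) (hLadd a)
  have himg' : ∀ a : F, (univ.image (fun x : F => f x + star x a)).card
      = if a = 0 then q else k + 1 := by
    intro a
    have h := himg a
    rw [hKa a] at h
    split_ifs at h ⊢ with ha
    · rw [one_mul] at h
      exact h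
    · omega
  constructor
  · -- Part 1 : the cardinality of D
    have hDfin : ({p : F × F | ∃ x : F, f x + star x p.1 + star p.1 p.1 = p.2})
        = ↑(univ.filter fun p : F × F => ∃ x : F, f x + star x p.1 + star p.1 p.1 = p.2) := by
      apply Set.ext
      intro p
      simp
    rw [hDfin, Set.ncard_coe_finset]
    have hstep : (univ.filter fun p : F × F => ∃ x : F, f x + star x p.1 + star p.1 p.1 = p.2).card
        = ∑ a : F, (univ.filter fun b : F => ∃ x : F, f x + star x a + star a a = b).card := by
      have hP := card_prod (fun a b : F => ∃ x : F, f x + star x a + star a a = b)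
      refine Eq.trans ?_ (Eq.trans hP ?_)
      · exact card_filter_iff fun p => Iff.rfl
      · exact Finset.sum_congr rfl fun a _ => card_filter_iff fun b => Iff.rfl
    rw [hstep]
    have hinner : ∀ a : F, (univ.filter fun b : F => ∃ x : F, f x + star x a + star a a = b).card
        = if a = 0 then q else k + 1 := by
      intro a
      rw [← himg' a]
      have hic := image_count h2 (fun x : F => f x + star x a) (star a a)
      refine Eq.trans ?_ hic
      exact card_filter_iff fun b => exists_congr fun x => eq_iff_char2 htwo (by ring)
    rw [Finset.sum_congr rfl fun a _ => hinner a]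
    rw [Finset.sum_ite, Finset.sum_const, Finset.sum_const, smul_eq_mul, smul_eq_mul]
    have hfeq : (univ.filter fun a : F => a = 0).card = 1 := by
      have : (univ.filter fun a : F => a = 0) = {0} := by
        apply Finset.ext
        intro a
        simp
      rw [this, Finset.card_singleton]
    have hfne : (univ.filter fun a : F => ¬a = 0).card = q - 1 := by
      have hh := Finset.card_filter_add_card_filter_not
        (s := (univ : Finset F)) (p := fun a : F => a = 0)
      rw [Finset.card_univ, hF, hfeq] at hh
      omega
    rw [hfeq, hfne]
    -- arithmetic
    have hq4 : q ^ 2 = 2 * (2 * ((k + 1) * (k + 1))) := by rw [hk]; ring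
    have e1 : q ^ 2 / 2 = 2 * ((k + 1) * (k + 1)) := by
      rw [hq4, Nat.mul_div_cancel_left _ (by norm_num : 0 < 2)]
    have e2 : q / 2 = k + 1 := by
      rw [hk, Nat.mul_div_cancel_left _ (by norm_num : 0 < 2)]
    rw [e1, e2]
    have hqm1 : q - 1 = 2 * k + 1 := by omega
    rw [hqm1, hk]
    ring
  · -- Part 2 : difference counts
    rintro ⟨c, e⟩ hg
    have hSfin : {dd : (F × F) × (F × F) |
          dd.1 ∈ {p : F × F | ∃ x : F, f x + star x p.1 + star p.1 p.1 = p.2} ∧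
          dd.2 ∈ {p : F × F | ∃ x : F, f x + star x p.1 + star p.1 p.1 = p.2} ∧
          gMul star dd.1 (gInv star dd.2) = (c, e)}
        = ↑(univ.filter fun dd : (F × F) × (F × F) =>
            (∃ x : F, f x + star x dd.1.1 + star dd.1.1 dd.1.1 = dd.1.2) ∧
            (∃ x : F, f x + star x dd.2.1 + star dd.2.1 dd.2.1 = dd.2.2) ∧
            gMul star dd.1 (gInv star dd.2) = (c, e)) := by
      apply Set.ext
      intro dd
      simp [Set.mem_setOf_eq]
    rw [hSfin, Set.ncard_coe_finset]
    -- Step A : project to the second factor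
    have hA : (univ.filter fun dd : (F × F) × (F × F) =>
            (∃ x : F, f x + star x dd.1.1 + star dd.1.1 dd.1.1 = dd.1.2) ∧
            (∃ x : F, f x + star x dd.2.1 + star dd.2.1 dd.2.1 = dd.2.2) ∧
            gMul star dd.1 (gInv star dd.2) = (c, e)).card
        = (univ.filter fun p : F × F =>
            (∃ x : F, f x + star x p.1 + star p.1 p.1 = p.2) ∧
            (∃ x : F, f x + star x (c + p.1) + star (c + p.1) (c + p.1)
              = e + p.2 + star p.1 p.1 + star (c + p.1) p.1)).card := by
      refine Finset.card_bij' (fun dd _ => dd.2)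
        (fun p _ => ((c + p.1, e + p.2 + star p.1 p.1 + star (c + p.1) p.1), p)) ?_ ?_ ?_ ?_
      case refine_1 =>
        intro dd hdd
        simp only [mem_filter, mem_univ, true_and] at hdd ⊢
        obtain ⟨hd1, hd2, hd3⟩ := hdd
        simp only [gMul, gInv, Prod.mk.injEq] at hd3
        obtain ⟨hc1, he1⟩ := hd3
        refine ⟨hd2, ?_⟩
        have ha1 : c + dd.2.1 = dd.1.1 := by linear_combination -hc1 + dd.2.1 * htwo
        rw [ha1]
        have hb1 : e + dd.2.2 + star dd.2.1 dd.2.1 + star dd.1.1 dd.2.1 = dd.1.2 := by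
          linear_combination -he1 + (dd.2.2 + star dd.2.1 dd.2.1 + star dd.1.1 dd.2.1) * htwo
        rw [hb1]
        exact hd1
      case refine_2 =>
        intro p hp
        simp only [mem_filter, mem_univ, true_and] at hp ⊢
        obtain ⟨hp1, hp2⟩ := hp
        refine ⟨hp2, hp1, ?_⟩
        simp only [gMul, gInv, Prod.mk.injEq]
        constructor
        · linear_combination p.1 * htwo
        · linear_combination (p.2 + star p.1 p.1 + star (c + p.1) p.1) * htwo
      case refine_3 =>
        intro dd hdd
        simp only [mem_filter, mem_univ, true_and] at hdd
        obtain ⟨hd1, hd2, hd3⟩ := hdd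
        simp only [gMul, gInv, Prod.mk.injEq] at hd3
        obtain ⟨hc1, he1⟩ := hd3
        have ha1 : c + dd.2.1 = dd.1.1 := by linear_combination -hc1 + dd.2.1 * htwo
        refine Prod.ext (Prod.ext ?_ ?_) rfl
        · exact ha1
        · show e + dd.2.2 + star dd.2.1 dd.2.1 + star (c + dd.2.1) dd.2.1 = dd.1.2
          rw [ha1]
          linear_combination -he1 + (dd.2.2 + star dd.2.1 dd.2.1 + star dd.1.1 dd.2.1) * htwo
      case refine_4 =>
        intro p _
        rfl
    rw [hA]
    -- Step B : fiberwise over the first coordinate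
    have hB : (univ.filter fun p : F × F =>
            (∃ x : F, f x + star x p.1 + star p.1 p.1 = p.2) ∧
            (∃ x : F, f x + star x (c + p.1) + star (c + p.1) (c + p.1)
              = e + p.2 + star p.1 p.1 + star (c + p.1) p.1)).card
        = ∑ a : F, (univ.filter fun b : F =>
            (∃ x : F, f x + star x a + star a a = b) ∧
            (∃ x : F, f x + star x (c + a) + star (c + a) (c + a)
              = e + b + star a a + star (c + a) a)).card := by
      have hP := card_prod (fun a b : F =>
        (∃ x : F, f x + star x a + star a a = b) ∧
        (∃ x : F, f x + star x (c + a) + star (c + a) (c + a)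
          = e + b + star a a + star (c + a) a))
      refine Eq.trans ?_ (Eq.trans hP ?_)
      · exact card_filter_iff fun p => Iff.rfl
      · exact Finset.sum_congr rfl fun a _ => card_filter_iff fun b => Iff.rfl
    rw [hB]
    -- Steps C and D : the key identity for each a
    have hterm : ∀ a : F,
        (if a = 0 then 1 else 2) * ((if c + a = 0 then 1 else 2) *
          (univ.filter fun b : F =>
            (∃ x : F, f x + star x a + star a a = b) ∧
            (∃ x : F, f x + star x (c + a) + star (c + a) (c + a)
              = e + b + star a a + star (c + a) a)).card)
        = (univ.filter fun p : F × F =>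
            f p.2 + star p.2 (c + a)
              = (f p.1 + star p.1 a) + (e + star (c + a) a + star (c + a) (c + a))).card := by
      intro a
      have hW := W h2 (fun y : F => f y + star y a) (fun x : F => f x + star x (c + a))
        (hLadd a) (hLadd (c + a)) (e + star (c + a) a + star (c + a) (c + a))
      have hS := shift_count h2
        (fun b : F => (∃ x : F, f x + star x a + star a a = b) ∧
          (∃ x : F, f x + star x (c + a) + star (c + a) (c + a)
            = e + b + star a a + star (c + a) a))
        (fun b : F => (∃ y : F, f y + star y a = b) ∧
          (∃ x : F, f x + star x (c + a)
            = b + (e + star (c + a) a + star (c + a) (c + a))))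
        (star a a)
        (fun b => and_congr
          (exists_congr fun x => eq_iff_char2 htwo (by ring))
          (exists_congr fun x => eq_iff_char2 htwo (by ring)))
      have emid : (univ.filter fun b : F =>
            (∃ x : F, f x + star x a + star a a = b) ∧
            (∃ x : F, f x + star x (c + a) + star (c + a) (c + a)
              = e + b + star a a + star (c + a) a)).card
          = (univ.filter fun b : F => (∃ y : F, f y + star y a = b) ∧
              (∃ x : F, f x + star x (c + a)
                = b + (e + star (c + a) a + star (c + a) (c + a)))).card := by
        refine Eq.trans ?_ (Eq.trans hS ?_)
        · exact card_filter_iff fun b => Iff.rfl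
        · exact card_filter_iff fun b => Iff.rfl
      rw [emid, ← hKa a, ← hKa (c + a)]
      calc (univ.filter fun x : F => f x + star x a = 0).card
            * ((univ.filter fun x : F => f x + star x (c + a) = 0).card
            * (univ.filter fun b : F => (∃ y : F, f y + star y a = b) ∧
                (∃ x : F, f x + star x (c + a)
                  = b + (e + star (c + a) a + star (c + a) (c + a)))).card)
          = (univ.filter fun x : F => f x + star x a = 0).card
            * (univ.filter fun x : F => f x + star x (c + a) = 0).card
            * (univ.filter fun b : F => (∃ y : F, f y + star y a = b) ∧
                (∃ x : F, f x + star x (c + a)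
                  = b + (e + star (c + a) a + star (c + a) (c + a)))).card :=
          (mul_assoc _ _ _).symm
        _ = _ := Eq.trans hW.symm (card_filter_iff fun p => Iff.rfl)
    -- evaluate the pair counts
    have e1 : q ^ 2 / 4 = (k + 1) * (k + 1) := by
      have : q ^ 2 = 4 * ((k + 1) * (k + 1)) := by rw [hk]; ring
      rw [this, Nat.mul_div_cancel_left _ (by norm_num : 0 < 4)]
    have e2 : q / 2 = k + 1 := by
      rw [hk, Nat.mul_div_cancel_left _ (by norm_num : 0 < 2)]
    rw [e1, e2]
    by_cases hc : c = 0
    · subst hc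
      have he : e ≠ 0 := by simpa using hg
      simp only [zero_add] at hterm ⊢
      -- pair counts in the case c = 0
      have hPS : ∀ a : F, (univ.filter fun p : F × F =>
            f p.2 + star p.2 a
              = (f p.1 + star p.1 a) + (e + star a a + star a a)).card
          = q * (univ.filter fun z : F => f z + star z a = e).card := by
        intro a
        have hP2 := P2 h2 (fun z : F => f z + star z a) e
        refine Eq.trans (card_filter_iff fun p => ?_) (Eq.trans hP2 ?_)
        · exact eq_iff_char2 htwo (by
            linear_combination (-1 : F) * hf_add p.1 p.2 - hstar_left p.1 p.2 a
              + star a a * htwo)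
        · rw [hF]
      have hcomb : ∀ a : F, (if a = 0 then 1 else 2) * ((if a = 0 then 1 else 2) *
            (univ.filter fun b : F =>
              (∃ x : F, f x + star x a + star a a = b) ∧
              (∃ x : F, f x + star x a + star a a
                = e + b + star a a + star a a)).card)
          = q * (univ.filter fun z : F => f z + star z a = e).card :=
        fun a => (hterm a).trans ((card_filter_iff fun p => Iff.rfl).trans (hPS a))
      -- value of k at 0
      have hk0 : (univ.filter fun z : F => f z + star z 0 = e).card = 1 := by
        set gf := Equiv.ofBijective f hf_bij with hgf
        have hx₀ : f (gf.symm e) = e := gf.apply_symm_apply e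
        have hsingle : (univ.filter fun z : F => f z + star z 0 = e) = {gf.symm e} := by
          apply Finset.ext
          intro z
          simp only [mem_filter, mem_univ, true_and, Finset.mem_singleton]
          rw [hs0r, add_zero]
          exact ⟨fun h => hf_bij.injective (h.trans hx₀.symm), fun h => h ▸ hx₀⟩
        rw [hsingle, Finset.card_singleton]
      -- the inner counts over a for fixed z
      have hg2 : ∀ z : F, (univ.filter fun a : F => a ≠ 0 ∧ f z + star z a = e).card
          = if z ≠ 0 ∧ f z ≠ e then 1 else 0 := by
        intro z
        by_cases hz : z = 0
        · subst hz
          rw [if_neg (by tauto)]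
          rw [Finset.card_eq_zero, Finset.filter_eq_empty_iff]
          rintro a _ ⟨_, hh⟩
          rw [hf0, hs0l, zero_add] at hh
          exact he hh.symm
        · set gz := Equiv.ofBijective (fun x : F => star x z) (hstar_bij z hz) with hgz
          have hcond : ∀ a : F, (f z + star z a = e) ↔ (a = gz.symm (e + f z)) := by
            intro a
            have h1 : (f z + star z a = e) ↔ (star a z = e + f z) :=
              eq_iff_char2 htwo (by linear_combination hstar_comm z a)
            rw [h1, Equiv.eq_symm_apply]
            exact Iff.rfl
          by_cases hfz : f z = e
          · have hz0 : gz.symm (e + f z) = 0 := by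
              rw [Equiv.symm_apply_eq]
              show e + f z = star 0 z
              rw [hs0l, hfz]
              exact h2 e
            rw [if_neg (by tauto)]
            rw [Finset.card_eq_zero, Finset.filter_eq_empty_iff]
            rintro a _ ⟨ha0, hae⟩
            exact ha0 (((hcond a).mp hae).trans hz0)
          · have ha0 : gz.symm (e + f z) ≠ 0 := by
              intro h0
              apply hfz
              rw [Equiv.symm_apply_eq] at h0
              have h0' : e + f z = 0 := by
                rw [h0]
                show star 0 z = 0
                exact hs0l z
              linear_combination h0' - e * htwo
            have hfilter : (univ.filter fun a : F => a ≠ 0 ∧ f z + star z a = e)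
                = {gz.symm (e + f z)} := by
              apply Finset.ext
              intro a
              simp only [mem_filter, mem_univ, true_and, Finset.mem_singleton]
              constructor
              · rintro ⟨_, h⟩
                exact (hcond a).mp h
              · rintro rfl
                exact ⟨ha0, (hcond _).mpr rfl⟩
            rw [hfilter, Finset.card_singleton, if_pos ⟨hz, hfz⟩]
      -- ∑_{a ≠ 0} k a = q - 2
      have hsum_erase : ∑ a ∈ univ.erase (0 : F),
          (univ.filter fun z : F => f z + star z a = e).card = q - 2 := by
        have hd1 := card_prod (fun a z : F => a ≠ 0 ∧ f z + star z a = e)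
        have hd2 := card_prod' (fun a z : F => a ≠ 0 ∧ f z + star z a = e)
        have hswap := hd1.symm.trans hd2
        -- left side equals the erase-sum
        have hleft : ∑ a : F, (univ.filter fun z : F => a ≠ 0 ∧ f z + star z a = e).card
            = ∑ a ∈ univ.erase (0 : F),
              (univ.filter fun z : F => f z + star z a = e).card := by
          rw [← Finset.sum_erase_add univ _ (mem_univ (0 : F))]
          have hzero : (univ.filter fun z : F => (0 : F) ≠ 0 ∧ f z + star z 0 = e).card = 0 := by
            rw [Finset.card_eq_zero, Finset.filter_eq_empty_iff]
            rintro z _ ⟨hh, _⟩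
            exact hh rfl
          rw [hzero, add_zero]
          refine Finset.sum_congr rfl fun a ha => ?_
          have ha0 : a ≠ 0 := (Finset.mem_erase.mp ha).1
          exact card_filter_iff fun z => and_iff_right ha0
        -- right side equals q - 2
        have hright : ∑ z : F, (univ.filter fun a : F => a ≠ 0 ∧ f z + star z a = e).card
            = q - 2 := by
          rw [Finset.sum_congr rfl fun z _ => hg2 z]
          rw [Finset.sum_ite, Finset.sum_const, Finset.sum_const, smul_eq_mul, smul_eq_mul,
            mul_one, mul_zero, add_zero]
          set gf := Equiv.ofBijective f hf_bij with hgf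
          have hx₀ : f (gf.symm e) = e := gf.apply_symm_apply e
          have hx₀0 : gf.symm e ≠ 0 := by
            intro h0
            apply he
            rw [← hx₀, h0, hf0]
          have hneg : (univ.filter fun z : F => ¬(z ≠ 0 ∧ f z ≠ e)).card = 2 := by
            have hns : (univ.filter fun z : F => ¬(z ≠ 0 ∧ f z ≠ e)) = {0, gf.symm e} := by
              apply Finset.ext
              intro z
              simp only [mem_filter, mem_univ, true_and, Finset.mem_insert,
                Finset.mem_singleton, not_and_or, not_not, ne_eq]
              constructor
              · rintro (h | h)
                · exact Or.inl h
                · exact Or.inr (hf_bij.injective (h.trans hx₀.symm))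
              · rintro (rfl | rfl)
                · exact Or.inl rfl
                · exact Or.inr hx₀
            rw [hns]
            exact Finset.card_pair (Ne.symm hx₀0)
          have htot := Finset.card_filter_add_card_filter_not
            (s := (univ : Finset F)) (p := fun z : F => z ≠ 0 ∧ f z ≠ e)
          rw [Finset.card_univ, hF] at htot
          omega
        rw [← hleft]
        refine Eq.trans ?_ (hswap.trans ?_)
        · exact Finset.sum_congr rfl fun a _ => card_filter_iff fun z => Iff.rfl
        · exact (Finset.sum_congr rfl fun z _ => card_filter_iff fun a => Iff.rfl).trans hright
      -- final summation
      have hT0 : (univ.filter fun b : F =>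
            (∃ x : F, f x + star x 0 + star 0 0 = b) ∧
            (∃ x : F, f x + star x 0 + star 0 0
              = e + b + star 0 0 + star 0 0)).card = q := by
        have h := hcomb 0
        rw [if_pos rfl, hk0, one_mul, one_mul, mul_one] at h
        exact h
      have h4Ta : ∀ a : F, a ≠ 0 → 4 * (univ.filter fun b : F =>
            (∃ x : F, f x + star x a + star a a = b) ∧
            (∃ x : F, f x + star x a + star a a
              = e + b + star a a + star a a)).card
          = q * (univ.filter fun z : F => f z + star z a = e).card := by
        intro a ha
        have h := hcomb a
        rw [if_neg ha] at h
        rw [← h]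
        ring
      apply Nat.eq_of_mul_eq_mul_left (by norm_num : 0 < 4)
      rw [← Finset.sum_erase_add univ _ (mem_univ (0 : F))]
      rw [Nat.mul_add, hT0, Finset.mul_sum]
      rw [Finset.sum_congr rfl fun a ha => h4Ta a (Finset.mem_erase.mp ha).1]
      rw [← Finset.mul_sum, hsum_erase]
      rw [hk]
      have h22 : 2 * (k + 1) - 2 = 2 * k := by omega
      rw [h22]
      ring
    · -- case c ≠ 0
      have hPS : ∀ a : F, (univ.filter fun p : F × F =>
            f p.2 + star p.2 (c + a)
              = (f p.1 + star p.1 a) + (e + star (c + a) a + star (c + a) (c + a))).card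
          = q := by
        intro a
        have hP1 := P1 h2 (fun x : F => star x c) (hstar_bij c hc)
          (fun z : F => f z + star z a + (e + star c c + star a c))
        refine Eq.trans (card_filter_iff fun p => ?_) (Eq.trans hP1 hF)
        refine eq_iff_char2 htwo ?_
        linear_combination hstar_right p.2 c a + hstar_left c a a + hstar_left c a (c + a)
          + hstar_right c c a + hstar_right a c a - hf_add p.1 p.2 - hstar_left p.1 p.2 a
          + (star c a + star a a) * htwo
      have hcomb : ∀ a : F, (if a = 0 then 1 else 2) * ((if c + a = 0 then 1 else 2) *
            (univ.filter fun b : F =>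
              (∃ x : F, f x + star x a + star a a = b) ∧
              (∃ x : F, f x + star x (c + a) + star (c + a) (c + a)
                = e + b + star a a + star (c + a) a)).card) = q :=
        fun a => (hterm a).trans (hPS a)
      set T : F → ℕ := fun a : F => (univ.filter fun b : F =>
          (∃ x : F, f x + star x a + star a a = b) ∧
          (∃ x : F, f x + star x (c + a) + star (c + a) (c + a)
            = e + b + star a a + star (c + a) a)).card with hTdef
      have hT0 : 2 * T 0 = q := by
        have h := hcomb 0
        rw [if_pos rfl, if_neg (show ¬(c + 0 = 0) by rw [add_zero]; exact hc), one_mul] at h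
        exact h
      have hTc : 2 * T c = q := by
        have h := hcomb c
        rw [if_neg hc, if_pos (h2 c), one_mul] at h
        exact h
      have hmemfilter : univ.filter (fun a : F => a ∈ ({0, c} : Finset F)) = {0, c} := by
        apply Finset.ext
        intro a
        simp
      have hcardnot : (univ.filter fun a : F => ¬ a ∈ ({0, c} : Finset F)).card = q - 2 := by
        have htot := Finset.card_filter_add_card_filter_not
          (s := (univ : Finset F)) (p := fun a : F => a ∈ ({0, c} : Finset F))
        rw [Finset.card_univ, hF, hmemfilter] at htot
        have h02 : ({0, c} : Finset F).card = 2 := Finset.card_pair (Ne.symm hc)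
        omega
      have hTa : ∀ a ∈ univ.filter (fun a : F => ¬ a ∈ ({0, c} : Finset F)),
          4 * T a = q := by
        intro a ha
        have hmem := (Finset.mem_filter.mp ha).2
        simp only [Finset.mem_insert, Finset.mem_singleton, not_or] at hmem
        obtain ⟨ha0, hac⟩ := hmem
        have hca : c + a ≠ 0 := by
          intro h0
          exact hac (by linear_combination h0 - c * htwo)
        have h := hcomb a
        rw [if_neg ha0, if_neg hca] at h
        simp only [hTdef]
        omega
      have hsum_not : ∑ a ∈ univ.filter (fun a : F => ¬ a ∈ ({0, c} : Finset F)),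
          4 * T a = (q - 2) * q := by
        rw [Finset.sum_congr rfl hTa, Finset.sum_const, smul_eq_mul, hcardnot]
      apply Nat.eq_of_mul_eq_mul_left (by norm_num : 0 < 4)
      have h40 : 4 * T 0 = 2 * q := by omega
      have h4c : 4 * T c = 2 * q := by omega
      rw [← Finset.sum_filter_add_sum_filter_not univ (fun a => a ∈ ({0, c} : Finset F)) T,
        hmemfilter, Finset.sum_pair (Ne.symm hc), Nat.mul_add, Nat.mul_add, h40, h4c,
        Finset.mul_sum, hsum_not]
      rw [hk]
      have h22 : 2 * (k + 1) - 2 = 2 * k := by omega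
      rw [h22]
      ring
end

section
/- Let n be an odd positive integer and q = 2^n, and let * denote the Knuth binary presemifield multiplication on F_q. Then for every y ∈ F_q one has y + 1*(y² + y) = y⁴, and consequently the sets {(y² + y, y + 1*(y² + y)) : y ∈ F_q} and {(z^{2^{n-1}} + z^{2^{n-2}}, z) : z ∈ F_q} of pairs in F_q × F_q are equal. (This shows that the shear fixing (0) and (1) maps the hyperoval O_g = {(y²+y, y)} ∪ {(0),(1)} of Π(K_n) onto O_{g'} = {(z^{2^{n-1}}+z^{2^{n-2}}, z)} ∪ {(0),(1)}, so O_g and O_{g'} are equivalent hyperovals.) -/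
/-- Equivalence of the hyperovals `O_g` and `O_{g'}` in `Π(K_n)`: for every `y ∈ F_q`
one has `y + 1*(y²+y) = y⁴` (Knuth multiplication `*`), and consequently the shear
fixing `(0)` and `(1)` maps the affine part of
`O_g = {(y²+y, y)} ∪ {(0),(1)}` onto that of
`O_{g'} = {(z^{2^{n-1}} + z^{2^{n-2}}, z)} ∪ {(0),(1)}`. -/
theorem Og_equivalent_Og'
    (n : ℕ) (hn : Odd n) (hn0 : 0 < n)
    {F : Type*} [Field F] [Fintype F] (hF : Fintype.card F = 2 ^ n)
    (Tr : F → F) (hTr : ∀ x : F, Tr x = ∑ i ∈ Finset.range n, x ^ 2 ^ i)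
    (kmul : F → F → F)
    (hkmul : ∀ x y : F, kmul x y = x * y + (y * Tr x + x * Tr y) ^ 2) :
    (∀ y : F, y + kmul 1 (y ^ 2 + y) = y ^ 4) ∧
    {p : F × F | ∃ y : F, p = (y ^ 2 + y, y + kmul 1 (y ^ 2 + y))} =
      {p : F × F | ∃ z : F, p = (z ^ 2 ^ (n - 1) + z ^ 2 ^ (n - 2), z)} := by
  -- characteristic 2
  have hchar : CharP F 2 := by
    obtain ⟨p, hp'⟩ := CharP.exists F
    haveI := hp'
    obtain ⟨k, hk, hcard⟩ := FiniteField.card F p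
    have hdvd : p ∣ 2 ^ n := by
      rw [← hF, hcard]; exact dvd_pow_self p k.pos.ne'
    have hp2 : p = 2 :=
      (Nat.prime_dvd_prime_iff_eq hk Nat.prime_two).mp (hk.dvd_of_dvd_pow hdvd)
    rwa [hp2] at hp'
  haveI := hchar
  have h0 : (2 : F) = 0 := by exact_mod_cast CharP.cast_eq_zero F 2
  have pow_card : ∀ a : F, a ^ 2 ^ n = a := fun a => by
    rw [← hF]; exact FiniteField.pow_card a
  -- Tr 1 = 1
  have hTr1 : Tr 1 = 1 := by
    obtain ⟨k, hk⟩ := hn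
    rw [hTr]
    simp only [one_pow, Finset.sum_const, Finset.card_range, nsmul_eq_mul, mul_one]
    rw [hk]
    push_cast
    rw [h0]; ring
  -- Tr (y^2 + y) = 0
  have hTr0 : ∀ y : F, Tr (y ^ 2 + y) = 0 := fun y => by
    rw [hTr]
    have hsum : ∀ i : ℕ, (y ^ 2 + y) ^ 2 ^ i = y ^ 2 ^ (i + 1) - y ^ 2 ^ i := by
      intro i
      rw [add_pow_char_pow, ← pow_mul, CharTwo.sub_eq_add, add_comm]
      ring_nf
    simp_rw [hsum]
    rw [Finset.sum_range_sub (fun i => y ^ 2 ^ i), pow_card]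
    simp
  -- key identity
  have key : ∀ y : F, y + kmul 1 (y ^ 2 + y) = y ^ 4 := fun y => by
    rw [hkmul, hTr1, hTr0]
    linear_combination (y + y ^ 2 + y ^ 3) * h0
  refine ⟨key, ?_⟩
  ext ⟨a, b⟩
  simp only [Set.mem_setOf_eq, Prod.mk.injEq, Prod.ext_iff]
  rcases eq_or_lt_of_le (Nat.one_le_iff_ne_zero.mpr hn0.ne') with h1 | h2
  · -- n = 1
    have hn1 : n = 1 := h1.symm
    subst hn1
    have hsq : ∀ a : F, a ^ 2 = a := fun a => by simpa using pow_card a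
    have h4 : ∀ a : F, a ^ 4 = a := fun a => by
      rw [show (4:ℕ) = 2*2 by norm_num, pow_mul, hsq, hsq]
    constructor
    · rintro ⟨y, rfl, rfl⟩
      refine ⟨y + kmul 1 (y ^ 2 + y), ?_, rfl⟩
      simp [hsq, key y, h4, CharTwo.add_self_eq_zero]
    · rintro ⟨z, rfl, rfl⟩
      refine ⟨b, ?_, ?_⟩
      · simp [hsq, CharTwo.add_self_eq_zero]
      · rw [key b, h4]
  · -- n ≥ 2
    have hn2 : 2 ≤ n := h2
    have hexp : 2 ^ (n - 2) * 4 = 2 ^ n := by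
      rw [show (4:ℕ) = 2^2 by norm_num, ← pow_add, Nat.sub_add_cancel hn2]
    have hexp1 : 2 ^ (n - 2) * 2 = 2 ^ (n - 1) := by
      rw [← pow_succ]
      congr 1
      omega
    constructor
    · rintro ⟨y, rfl, rfl⟩
      refine ⟨y + kmul 1 (y ^ 2 + y), ?_, rfl⟩
      rw [key y]
      have e1 : (y ^ 4) ^ 2 ^ (n - 2) = y := by
        rw [← pow_mul, mul_comm, hexp, pow_card]
      have e2 : (y ^ 4) ^ 2 ^ (n - 1) = y ^ 2 := by
        rw [← hexp1, pow_mul, e1]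
      rw [e1, e2]
    · rintro ⟨z, rfl, rfl⟩
      refine ⟨b ^ 2 ^ (n - 2), ?_, ?_⟩
      · rw [← pow_mul, hexp1]
      · rw [key, ← pow_mul, hexp, pow_card]
end
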